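/- Let S be a generalized double circle, p an extreme point of S, q a neighbor of p that is an interior point (so p, q lie on a common concave chain C_pq), and x ∈ S a point such that the open triangle pqx contains a point of S. Then x does not belong to C_pq, but x belongs to the other concave chain containing p. -/

import Mathlib

open scoped Classical

noncomputable section

abbrev Pt : Type := ℝ × ℝ

/-- default point -/
def pd : Pt := (0, 0)

/-- No three distinct points of `S` are collinear. -/
def GenPos (S : Finset Pt) : Prop :=
  ∀ p ∈ S, ∀ q ∈ S, ∀ r ∈ S, p ≠ q → p ≠ r → q ≠ r →
    ¬ Collinear ℝ ({p, q, r} : Set Pt)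

/-- The (ordered) edges of a path given as a list of vertices. -/
def pathEdges (l : List Pt) : List (Pt × Pt) := l.zip l.tail

/-- The (ordered) edges of a cycle given as a list of vertices. -/
def cycleEdges (l : List Pt) : List (Pt × Pt) := l.zip (l.rotate 1)

/-- A family of straight-line segments is pairwise non-crossing:
the open segments of any two distinct members are disjoint. -/
def NonCrossing (E : List (Pt × Pt)) : Prop :=
  E.Pairwise fun e f => openSegment ℝ e.1 e.2 ∩ openSegment ℝ f.1 f.2 = ∅

/-- `l` is a plane (crossing-free) straight-line spanning path of `S`. -/
def IsPlanePath (S : Finset Pt) (l : List Pt) : Prop :=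
  l.Nodup ∧ l.toFinset = S ∧ NonCrossing (pathEdges l)

/-- `l` is a plane straight-line spanning cycle of `S`. -/
def IsPlaneCycle (S : Finset Pt) (l : List Pt) : Prop :=
  3 ≤ l.length ∧ l.Nodup ∧ l.toFinset = S ∧ NonCrossing (cycleEdges l)

/-- The set of edges of a path, as unordered pairs. -/
def edgeSet (l : List Pt) : Finset (Sym2 Pt) :=
  ((pathEdges l).map fun e => s(e.1, e.2)).toFinset

/-- The set of edges of a cycle, as unordered pairs. -/
def cycleEdgeSet (l : List Pt) : Finset (Sym2 Pt) :=
  ((cycleEdges l).map fun e => s(e.1, e.2)).toFinset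

/-- No segment joining two points of `S` crosses any edge of the cycle `l`. -/
def UncrossedCycle (S : Finset Pt) (l : List Pt) : Prop :=
  ∀ a ∈ S, ∀ b ∈ S, a ≠ b → ∀ e ∈ cycleEdges l, s(a, b) ≠ s(e.1, e.2) →
    openSegment ℝ a b ∩ openSegment ℝ e.1 e.2 = ∅

/-- Two plane spanning paths of `S` differ by a single flip. -/
def FlipAdj (S : Finset Pt) (P Q : List Pt) : Prop :=
  IsPlanePath S P ∧ IsPlanePath S Q ∧
    ∃ e f, e ≠ f ∧ e ∈ edgeSet P ∧ f ∈ edgeSet Q ∧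
      (edgeSet P).erase e = (edgeSet Q).erase f

/-- There is a sequence of `k` flips from `P` to (a representative of) `Q`, all of whose
members are plane spanning paths of `S` satisfying the additional property `A`. -/
def FlipSeq (S : Finset Pt) (A : List Pt → Prop) (k : ℕ) (P Q : List Pt) : Prop :=
  ∃ f : ℕ → List Pt, f 0 = P ∧ edgeSet (f k) = edgeSet Q ∧
    (∀ i ≤ k, IsPlanePath S (f i) ∧ A (f i)) ∧
    ∀ i < k, FlipAdj S (f i) (f (i + 1))

/-- The flip graph on the plane spanning paths of `S` satisfying `A` is connected. -/
def FlipConnected (S : Finset Pt) (A : List Pt → Prop) : Prop :=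
  ∀ P Q : List Pt, IsPlanePath S P → A P → IsPlanePath S Q → A Q →
    ∃ k, FlipSeq S A k P Q

/-- `uv` is an edge of the boundary of the convex hull of `S`. -/
def HullEdge (S : Finset Pt) (u v : Pt) : Prop :=
  u ∈ S ∧ v ∈ S ∧ u ≠ v ∧ segment ℝ u v ⊆ frontier (convexHull ℝ (S : Set Pt))

/-- `p` is an extreme point (a vertex of the convex hull) of `S`. -/
def ExtremePt (S : Finset Pt) (p : Pt) : Prop :=
  p ∈ S ∧ p ∉ convexHull ℝ ((S.erase p : Finset Pt) : Set Pt)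

/-- `p` is a point of `S` lying strictly in the interior of the convex hull of `S`. -/
def InteriorPt (S : Finset Pt) (p : Pt) : Prop :=
  p ∈ S ∧ p ∈ interior (convexHull ℝ (S : Set Pt))

/-- Twice the signed area of the triangle `a b c` (orientation test). -/
def sign3 (a b c : Pt) : ℝ :=
  (b.1 - a.1) * (c.2 - a.2) - (b.2 - a.2) * (c.1 - a.1)

/-- A finite point set is in convex position. -/
def ConvexPos (C : Finset Pt) : Prop :=
  ∀ x ∈ C, x ∉ convexHull ℝ ((C.erase x : Finset Pt) : Set Pt)

/-- `C` is a concave chain of `S` between the extreme points `p` and `q`: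
`C` is in convex position, contains no extreme points of `S` other than `p, q`,
and every line through two points of `C` has all of `S \ C` strictly inside the
open halfplane containing neither `p` nor `q`. -/
def IsConcaveChain (S C : Finset Pt) (p q : Pt) : Prop :=
  C ⊆ S ∧ p ∈ C ∧ q ∈ C ∧ p ≠ q ∧ ExtremePt S p ∧ ExtremePt S q ∧
  ConvexPos C ∧
  (∀ x ∈ C, ExtremePt S x → x = p ∨ x = q) ∧
  ∀ x ∈ C, ∀ y ∈ C, x ≠ y → ∀ z ∈ S, z ∉ C →
    sign3 x y z ≠ 0 ∧ sign3 x y z * sign3 x y p ≤ 0 ∧ sign3 x y z * sign3 x y q ≤ 0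

/-- A generalized double circle structure on `S`: a family of concave chains such
that every interior point of `S` lies on exactly one chain and every extreme
point of `S` lies on exactly two chains. -/
structure GDCOn (S : Finset Pt) where
  chains : Finset (Finset Pt)
  chains_concave : ∀ C ∈ chains, ∃ p q, IsConcaveChain S C p q
  interior_mem : ∀ x ∈ S, ¬ ExtremePt S x → (chains.filter fun C => x ∈ C).card = 1
  extreme_mem : ∀ x ∈ S, ExtremePt S x → (chains.filter fun C => x ∈ C).card = 2

/-- `xy` is an edge of the hull-boundary path of the chain `C` from `p` to `q`
(an edge of the convex hull boundary of `C` other than the closing edge `pq`,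
unless the chain consists of `p` and `q` only). -/
def ChainEdge (C : Finset Pt) (p q x y : Pt) : Prop :=
  x ∈ C ∧ y ∈ C ∧ x ≠ y ∧
  segment ℝ x y ⊆ frontier (convexHull ℝ (C : Set Pt)) ∧
  (C.card ≤ 2 ∨ s(x, y) ≠ s(p, q))

/-- `u` and `v` are neighbors: consecutive along the spanning cycle formed by
the concave chains of the generalized double circle `g`. -/
def GDCNeighbors {S : Finset Pt} (g : GDCOn S) (u v : Pt) : Prop :=
  ∃ C ∈ g.chains, ∃ p q, IsConcaveChain S C p q ∧ ChainEdge C p q u v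

/-! ### Auxiliary lemmas -/

lemma sign3_self1 (a b : Pt) : sign3 a b a = 0 := by unfold sign3; ring

lemma sign3_self2 (a b : Pt) : sign3 a b b = 0 := by unfold sign3; ring

lemma sign3_cyc (a b c : Pt) : sign3 a b c = sign3 b c a := by unfold sign3; ring

lemma sign3_sum (p q x z : Pt) :
    sign3 q x z + sign3 x p z + sign3 p q z = sign3 p q x := by unfold sign3; ring

lemma sign3_bary (a b p q x y : Pt) : sign3 p q x * sign3 a b y =
    sign3 q x y * sign3 a b p + sign3 x p y * sign3 a b q + sign3 p q y * sign3 a b x := by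
  unfold sign3; ring

lemma sign3_shift (a b y v : Pt) (c : ℝ) :
    sign3 a b (y.1 + c * v.1, y.2 + c * v.2)
      = sign3 a b y + c * ((b.1 - a.1) * v.2 - (b.2 - a.2) * v.1) := by
  unfold sign3; ring

lemma sign3_ne12 {p q x : Pt} (h : sign3 p q x ≠ 0) : p ≠ q := by
  rintro rfl; exact h (by unfold sign3; ring)

lemma sign3_ne13 {p q x : Pt} (h : sign3 p q x ≠ 0) : p ≠ x := by
  rintro rfl; exact h (by unfold sign3; ring)

lemma sign3_ne23 {p q x : Pt} (h : sign3 p q x ≠ 0) : q ≠ x := by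
  rintro rfl; exact h (by unfold sign3; ring)

lemma sign3_combo (a b u v : Pt) (θ τ : ℝ) (h : θ + τ = 1) :
    sign3 a b (θ • u + τ • v) = θ * sign3 a b u + τ * sign3 a b v := by
  have hτ : τ = 1 - θ := by linarith
  subst hτ
  unfold sign3
  simp only [Prod.fst_add, Prod.snd_add, Prod.smul_fst, Prod.smul_snd, smul_eq_mul]
  ring

lemma collinear_of_sign3 {p q r : Pt} (hpq : p ≠ q) (h : sign3 p q r = 0) :
    Collinear ℝ ({p, q, r} : Set Pt) := by
  rw [collinear_iff_of_mem (Set.mem_insert p {q, r})]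
  refine ⟨q - p, ?_⟩
  intro z hz
  rcases hz with rfl | rfl | rfl
  · exact ⟨0, by simp⟩
  · exact ⟨1, by simp⟩
  · -- r = t • (q - p) + p
    have hc : (q.1 - p.1) * (z.2 - p.2) = (q.2 - p.2) * (z.1 - p.1) := by
      have := h; unfold sign3 at this; linarith
    by_cases h1 : q.1 - p.1 = 0
    · have h2 : q.2 - p.2 ≠ 0 := by
        intro h2; apply hpq; apply Prod.ext <;> [linarith; linarith]
      refine ⟨(z.2 - p.2) / (q.2 - p.2), ?_⟩
      have hz1 : z.1 - p.1 = 0 := by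
        have := hc; rw [h1] at this
        have : (q.2 - p.2) * (z.1 - p.1) = 0 := by linarith
        rcases mul_eq_zero.mp this with h' | h'
        · exact absurd h' h2
        · exact h'
      apply Prod.ext
      · show z.1 = (z.2 - p.2) / (q.2 - p.2) * (q.1 - p.1) + p.1
        rw [h1]; ring_nf; linarith
      · show z.2 = (z.2 - p.2) / (q.2 - p.2) * (q.2 - p.2) + p.2
        field_simp
        ring
    · refine ⟨(z.1 - p.1) / (q.1 - p.1), ?_⟩
      apply Prod.ext
      · show z.1 = (z.1 - p.1) / (q.1 - p.1) * (q.1 - p.1) + p.1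
        field_simp
        ring
      · show z.2 = (z.1 - p.1) / (q.1 - p.1) * (q.2 - p.2) + p.2
        rw [div_mul_eq_mul_div, eq_comm, div_add' _ _ _ h1, div_eq_iff h1]
        nlinarith [hc]

lemma gp_sign3 {S : Finset Pt} (hgp : GenPos S) {p q r : Pt}
    (hp : p ∈ S) (hq : q ∈ S) (hr : r ∈ S)
    (h1 : p ≠ q) (h2 : p ≠ r) (h3 : q ≠ r) : sign3 p q r ≠ 0 := by
  intro h0
  exact hgp p hp q hq r hr h1 h2 h3 (collinear_of_sign3 h1 h0)

lemma pert {s : Set Pt} {y : Pt} (hy : y ∈ interior s) (v : Pt) :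
    ∃ t : ℝ, 0 < t ∧ (y.1 + t * v.1, y.2 + t * v.2) ∈ s ∧
      (y.1 - t * v.1, y.2 - t * v.2) ∈ s := by
  rw [mem_interior_iff_mem_nhds, Metric.mem_nhds_iff] at hy
  obtain ⟨ε, hε, hball⟩ := hy
  set a : ℝ := |v.1| + |v.2| with ha
  have ha0 : 0 ≤ a := by positivity
  set t : ℝ := ε / (2 * a + 1) with htdef
  have ht : 0 < t := by positivity
  have key : t * a < ε := by
    rw [htdef, div_mul_eq_mul_div, div_lt_iff₀ (by positivity)]
    nlinarith
  have hv1 : |v.1| ≤ a := by rw [ha]; exact le_add_of_nonneg_right (abs_nonneg _)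
  have hv2 : |v.2| ≤ a := by rw [ha]; exact le_add_of_nonneg_left (abs_nonneg _)
  have hb1 : t * |v.1| < ε :=
    lt_of_le_of_lt (mul_le_mul_of_nonneg_left hv1 ht.le) key
  have hb2 : t * |v.2| < ε :=
    lt_of_le_of_lt (mul_le_mul_of_nonneg_left hv2 ht.le) key
  refine ⟨t, ht, ?_, ?_⟩
  · apply hball
    rw [Metric.mem_ball, Prod.dist_eq]
    apply max_lt
    · show dist (y.1 + t * v.1) y.1 < ε
      rw [Real.dist_eq, add_sub_cancel_left, abs_mul, abs_of_pos ht]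
      exact hb1
    · show dist (y.2 + t * v.2) y.2 < ε
      rw [Real.dist_eq, add_sub_cancel_left, abs_mul, abs_of_pos ht]
      exact hb2
  · apply hball
    rw [Metric.mem_ball, Prod.dist_eq]
    apply max_lt
    · show dist (y.1 - t * v.1) y.1 < ε
      rw [Real.dist_eq, sub_sub_cancel_left, abs_neg, abs_mul, abs_of_pos ht]
      exact hb1
    · show dist (y.2 - t * v.2) y.2 < ε
      rw [Real.dist_eq, sub_sub_cancel_left, abs_neg, abs_mul, abs_of_pos ht]
      exact hb2

lemma line_empty (p q x : Pt) (A B K : ℝ) (hAB : ¬(A = 0 ∧ B = 0))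
    (hp : A * p.1 + B * p.2 + K = 0) (hq : A * q.1 + B * q.2 + K = 0)
    (hx : A * x.1 + B * x.2 + K = 0) :
    interior (convexHull ℝ ({p, q, x} : Set Pt)) = ∅ := by
  rw [Set.eq_empty_iff_forall_notMem]
  intro y hy
  have hsub : convexHull ℝ ({p, q, x} : Set Pt) ⊆ {z : Pt | A * z.1 + B * z.2 + K = 0} := by
    apply convexHull_min
    · rintro z (rfl | rfl | rfl) <;> assumption
    · intro u hu v hv θ τ hθ hτ hsum
      simp only [Set.mem_setOf_eq] at hu hv ⊢
      simp only [Prod.fst_add, Prod.snd_add, Prod.smul_fst, Prod.smul_snd, smul_eq_mul]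
      have : τ = 1 - θ := by linarith
      subst this
      nlinarith [hu, hv]
  obtain ⟨t, ht, hplus, hminus⟩ := pert hy (A, B)
  have e1 := hsub hplus
  have e2 := hsub hminus
  simp only [Set.mem_setOf_eq] at e1 e2
  have h5 : t * (A ^ 2 + B ^ 2) = 0 := by linear_combination (e1 - e2) / 2
  have h6 : A ^ 2 + B ^ 2 = 0 := by
    rcases mul_eq_zero.mp h5 with h' | h'
    · exact absurd h' (ne_of_gt ht)
    · exact h'
  have hA : A ^ 2 = 0 := by linarith [sq_nonneg A, sq_nonneg B]
  have hB : B ^ 2 = 0 := by linarith [sq_nonneg A, sq_nonneg B]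
  exact hAB ⟨sq_eq_zero_iff.mp hA, sq_eq_zero_iff.mp hB⟩

lemma interior_strict {s : Set Pt} (a b : Pt) (hab : a ≠ b) (K : ℝ) (hK : K ≠ 0)
    (hsub : s ⊆ {z : Pt | 0 ≤ sign3 a b z * K}) {y : Pt} (hy : y ∈ interior s) :
    0 < sign3 a b y * K := by
  have h0 : 0 ≤ sign3 a b y * K := hsub (interior_subset hy)
  rcases h0.lt_or_eq with h | h
  · exact h
  · exfalso
    set v : Pt := (-(K * (b.2 - a.2)), K * (b.1 - a.1)) with hv
    obtain ⟨t, ht, _, hminus⟩ := pert hy v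
    have hmem := hsub hminus
    simp only [Set.mem_setOf_eq] at hmem
    have hcalc : sign3 a b (y.1 - t * v.1, y.2 - t * v.2)
        = sign3 a b y + (-t) * ((b.1 - a.1) * v.2 - (b.2 - a.2) * v.1) := by
      have := sign3_shift a b y v (-t)
      convert this using 2 <;> ring
    have hn : 0 < (b.1 - a.1) ^ 2 + (b.2 - a.2) ^ 2 := by
      have : a.1 ≠ b.1 ∨ a.2 ≠ b.2 := by
        by_contra hc; push_neg at hc; exact hab (Prod.ext hc.1 hc.2)
      rcases this with h' | h'
      · have := mul_self_pos.mpr (sub_ne_zero.mpr h'.symm)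
        nlinarith [sq_nonneg (b.2 - a.2)]
      · have := mul_self_pos.mpr (sub_ne_zero.mpr h'.symm)
        nlinarith [sq_nonneg (b.1 - a.1)]
    have hvv : (b.1 - a.1) * v.2 - (b.2 - a.2) * v.1
        = K * ((b.1 - a.1) ^ 2 + (b.2 - a.2) ^ 2) := by
      rw [hv]; ring
    rw [hcalc, hvv] at hmem
    have hK2 : 0 < K * K := mul_self_pos.mpr hK
    have hpos : 0 < t * ((K * K) * ((b.1 - a.1) ^ 2 + (b.2 - a.2) ^ 2)) :=
      mul_pos ht (mul_pos hK2 hn)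
    nlinarith [hmem, hpos, h]

lemma convex_halfplane (a b : Pt) (K : ℝ) : Convex ℝ {z : Pt | 0 ≤ sign3 a b z * K} := by
  intro u hu v hv θ τ hθ hτ hsum
  simp only [Set.mem_setOf_eq] at hu hv ⊢
  rw [sign3_combo a b u v θ τ hsum]
  nlinarith [mul_nonneg hθ hu, mul_nonneg hτ hv]

/-- Strict barycentric positivity for a point interior to a triangle. -/
lemma tri {p q x y : Pt} (hy : y ∈ interior (convexHull ℝ ({p, q, x} : Set Pt))) :
    0 < sign3 p q y * sign3 p q x ∧ 0 < sign3 q x y * sign3 p q x ∧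
      0 < sign3 x p y * sign3 p q x := by
  set D := sign3 p q x with hD
  have hD0 : D ≠ 0 := by
    intro h0
    by_cases hpq : p = q
    · by_cases hpx : p = x
      · subst hpq; subst hpx
        have := line_empty p p p 1 0 (-p.1) (by simp) (by ring) (by ring) (by ring)
        rw [this] at hy; exact hy
      · subst hpq
        have hx1 : ¬(-(x.2 - p.2) = 0 ∧ x.1 - p.1 = 0) := by
          rintro ⟨h1, h2⟩; exact hpx (Prod.ext (by linarith) (by linarith)).symm
        have := line_empty p p x (-(x.2 - p.2)) (x.1 - p.1)
          (-((-(x.2 - p.2)) * p.1 + (x.1 - p.1) * p.2)) hx1 (by ring) (by ring) (by ring)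
        rw [this] at hy; exact hy
    · have hx1 : ¬(-(q.2 - p.2) = 0 ∧ q.1 - p.1 = 0) := by
        rintro ⟨h1, h2⟩; exact hpq (Prod.ext (by linarith) (by linarith))
      have hxx : (-(q.2 - p.2)) * x.1 + (q.1 - p.1) * x.2
          + (-((-(q.2 - p.2)) * p.1 + (q.1 - p.1) * p.2)) = 0 := by
        have : sign3 p q x = 0 := h0
        unfold sign3 at this; linarith
      have := line_empty p q x (-(q.2 - p.2)) (q.1 - p.1)
        (-((-(q.2 - p.2)) * p.1 + (q.1 - p.1) * p.2)) hx1 (by ring) (by ring) hxx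
      rw [this] at hy; exact hy
  have hpq : p ≠ q := sign3_ne12 hD0
  have hpx : p ≠ x := sign3_ne13 hD0
  have hqx : q ≠ x := sign3_ne23 hD0
  have hsub1 : convexHull ℝ ({p, q, x} : Set Pt) ⊆ {z : Pt | 0 ≤ sign3 p q z * D} := by
    apply convexHull_min _ (convex_halfplane p q D)
    intro z hz
    simp only [Set.mem_insert_iff, Set.mem_singleton_iff] at hz
    simp only [Set.mem_setOf_eq]
    rcases hz with h | h | h <;> rw [h]
    · rw [sign3_self1]; simp
    · rw [sign3_self2]; simp
    · rw [← hD]; exact mul_self_nonneg D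
  have hsub2 : convexHull ℝ ({p, q, x} : Set Pt) ⊆ {z : Pt | 0 ≤ sign3 q x z * D} := by
    apply convexHull_min _ (convex_halfplane q x D)
    intro z hz
    simp only [Set.mem_insert_iff, Set.mem_singleton_iff] at hz
    simp only [Set.mem_setOf_eq]
    rcases hz with h | h | h <;> rw [h]
    · rw [show sign3 q x p = D by rw [hD]; unfold sign3; ring]; exact mul_self_nonneg D
    · rw [sign3_self1]; simp
    · rw [sign3_self2]; simp
  have hsub3 : convexHull ℝ ({p, q, x} : Set Pt) ⊆ {z : Pt | 0 ≤ sign3 x p z * D} := by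
    apply convexHull_min _ (convex_halfplane x p D)
    intro z hz
    simp only [Set.mem_insert_iff, Set.mem_singleton_iff] at hz
    simp only [Set.mem_setOf_eq]
    rcases hz with h | h | h <;> rw [h]
    · rw [sign3_self2]; simp
    · rw [show sign3 x p q = D by rw [hD]; unfold sign3; ring]; exact mul_self_nonneg D
    · rw [sign3_self1]; simp
  exact ⟨interior_strict p q hpq D hD0 hsub1 hy,
    interior_strict q x hqx D hD0 hsub2 hy,
    interior_strict x p (Ne.symm hpx) D hD0 hsub3 hy⟩

/-- Barycentric membership in a triangle's hull. -/
lemma convmem {p q y : Pt} (z : Pt) (hD : sign3 p q y ≠ 0)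
    (h1 : 0 ≤ sign3 q y z * sign3 p q y) (h2 : 0 ≤ sign3 y p z * sign3 p q y)
    (h3 : 0 ≤ sign3 p q z * sign3 p q y) :
    z ∈ convexHull ℝ ({p, q, y} : Set Pt) := by
  set D := sign3 p q y with hDdef
  set N : ℝ := D * D with hN
  have hN0 : 0 < N := mul_self_pos.mpr hD
  set c1 : ℝ := sign3 q y z * D / N with hc1
  set c2 : ℝ := sign3 y p z * D / N with hc2
  set c3 : ℝ := sign3 p q z * D / N with hc3
  have hsum : c1 + c2 + c3 = 1 := by
    have hexp : c1 + c2 + c3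
        = (sign3 q y z + sign3 y p z + sign3 p q z) * D / N := by
      rw [hc1, hc2, hc3]; ring
    rw [hexp, sign3_sum, ← hDdef, hN]
    field_simp
  have heq : c1 • p + c2 • q + c3 • y = z := by
    have cram1 : sign3 q y z * p.1 + sign3 y p z * q.1 + sign3 p q z * y.1 = D * z.1 := by
      rw [hDdef]; unfold sign3; ring
    have cram2 : sign3 q y z * p.2 + sign3 y p z * q.2 + sign3 p q z * y.2 = D * z.2 := by
      rw [hDdef]; unfold sign3; ring
    apply Prod.ext
    · show c1 * p.1 + c2 * q.1 + c3 * y.1 = z.1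
      have hexp : c1 * p.1 + c2 * q.1 + c3 * y.1
          = (sign3 q y z * p.1 + sign3 y p z * q.1 + sign3 p q z * y.1) * D / N := by
        rw [hc1, hc2, hc3]; ring
      rw [hexp, cram1, hN]
      field_simp
    · show c1 * p.2 + c2 * q.2 + c3 * y.2 = z.2
      have hexp : c1 * p.2 + c2 * q.2 + c3 * y.2
          = (sign3 q y z * p.2 + sign3 y p z * q.2 + sign3 p q z * y.2) * D / N := by
        rw [hc1, hc2, hc3]; ring
      rw [hexp, cram2, hN]
      field_simp
  rw [← heq]
  have hconv : Convex ℝ (convexHull ℝ ({p, q, y} : Set Pt)) := convex_convexHull ℝ _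
  have hp' : p ∈ convexHull ℝ ({p, q, y} : Set Pt) := subset_convexHull ℝ _ (by simp)
  have hq' : q ∈ convexHull ℝ ({p, q, y} : Set Pt) := subset_convexHull ℝ _ (by simp)
  have hy' : y ∈ convexHull ℝ ({p, q, y} : Set Pt) := subset_convexHull ℝ _ (by simp)
  have hc1' : 0 ≤ c1 := by rw [hc1]; positivity
  have hc2' : 0 ≤ c2 := by rw [hc2]; positivity
  have hc3' : 0 ≤ c3 := by rw [hc3]; positivity
  have h12 : c1 • p + c2 • q + c3 • y
      = (c1 + c2) • ((c1 / (c1 + c2 + c3 - c3)) • p + (c2 / (c1 + c2)) • q) + c3 • y := by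
    by_cases h12' : c1 + c2 = 0
    · have hc10 : c1 = 0 := by linarith
      have hc20 : c2 = 0 := by linarith
      rw [hc10, hc20]; simp
    · rw [show c1 + c2 + c3 - c3 = c1 + c2 by ring]
      rw [smul_add, smul_smul, smul_smul]
      rw [mul_div_cancel₀ _ h12', mul_div_cancel₀ _ h12']
  by_cases h12' : c1 + c2 = 0
  · have hc10 : c1 = 0 := by linarith
    have hc20 : c2 = 0 := by linarith
    have hc31 : c3 = 1 := by linarith
    rw [hc10, hc20, hc31]; simpa using hy'
  · have hc12 : 0 < c1 + c2 := lt_of_le_of_ne (by linarith) (Ne.symm h12')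
    have hmid : (c1 / (c1 + c2)) • p + (c2 / (c1 + c2)) • q
        ∈ convexHull ℝ ({p, q, y} : Set Pt) := by
      apply hconv hp' hq' (by positivity) (by positivity)
      field_simp
    have := hconv hmid hy' (le_of_lt hc12) hc3' (by linarith)
    rw [smul_add, smul_smul, smul_smul] at this
    rw [mul_div_cancel₀ _ h12', mul_div_cancel₀ _ h12'] at this
    exact this

lemma cont_sign3 (a b : Pt) (K : ℝ) : Continuous fun z : Pt => sign3 a b z * K := by
  unfold sign3; fun_prop

/-- All of `C` lies on one closed side of the line through a hull edge `pq` of `C`. -/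
lemma hullF {C : Finset Pt} {p q y w : Pt}
    (hpm : p ∈ C) (hqm : q ∈ C) (hym : y ∈ C) (hwm : w ∈ C)
    (hDy : sign3 p q y ≠ 0) (hDw : sign3 p q w ≠ 0)
    (hseg : segment ℝ p q ⊆ frontier (convexHull ℝ (C : Set Pt))) :
    0 ≤ sign3 p q y * sign3 p q w := by
  by_contra hcon
  push_neg at hcon
  set Dy := sign3 p q y with hDydef
  set Dw := sign3 p q w with hDwdef
  set m : Pt := ((p.1 + q.1) / 2, (p.2 + q.2) / 2) with hm
  have hmseg : m ∈ segment ℝ p q := by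
    refine ⟨1/2, 1/2, by norm_num, by norm_num, by norm_num, ?_⟩
    apply Prod.ext
    · show (1/2 : ℝ) * p.1 + (1/2 : ℝ) * q.1 = (p.1 + q.1) / 2; ring
    · show (1/2 : ℝ) * p.2 + (1/2 : ℝ) * q.2 = (p.2 + q.2) / 2; ring
  have hmfr := hseg hmseg
  rw [frontier] at hmfr
  apply hmfr.2
  rw [mem_interior_iff_mem_nhds, mem_nhds_iff]
  refine ⟨{z | 0 < sign3 q y z * Dy} ∩ {z | 0 < sign3 y p z * Dy}
      ∩ {z | 0 < sign3 q w z * Dw} ∩ {z | 0 < sign3 w p z * Dw}, ?_, ?_, ?_⟩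
  · rintro z ⟨⟨⟨hz1, hz2⟩, hz3⟩, hz4⟩
    simp only [Set.mem_setOf_eq] at hz1 hz2 hz3 hz4
    by_cases h3 : 0 ≤ sign3 p q z * Dy
    · have := convmem z hDy (le_of_lt hz1) (le_of_lt hz2) h3
      refine convexHull_mono ?_ this
      intro a ha
      rcases ha with rfl | rfl | rfl <;> simpa using (by assumption : a ∈ C)
    · push_neg at h3
      have h3' : 0 ≤ sign3 p q z * Dw := by nlinarith [mul_self_pos.mpr hDy]
      have := convmem z hDw (le_of_lt hz3) (le_of_lt hz4) h3'
      refine convexHull_mono ?_ this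
      intro a ha
      rcases ha with rfl | rfl | rfl <;> simpa using (by assumption : a ∈ C)
  · exact (((isOpen_lt continuous_const (cont_sign3 q y Dy)).inter
      (isOpen_lt continuous_const (cont_sign3 y p Dy))).inter
      (isOpen_lt continuous_const (cont_sign3 q w Dw))).inter
      (isOpen_lt continuous_const (cont_sign3 w p Dw))
  · have e1 : sign3 q y m = Dy / 2 := by
      rw [hDydef, hm]; unfold sign3; ring
    have e2 : sign3 y p m = Dy / 2 := by
      rw [hDydef, hm]; unfold sign3; ring
    have e3 : sign3 q w m = Dw / 2 := by
      rw [hDwdef, hm]; unfold sign3; ring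
    have e4 : sign3 w p m = Dw / 2 := by
      rw [hDwdef, hm]; unfold sign3; ring
    refine ⟨⟨⟨?_, ?_⟩, ?_⟩, ?_⟩ <;> simp only [Set.mem_setOf_eq]
    · rw [e1]; nlinarith [mul_self_pos.mpr hDy]
    · rw [e2]; nlinarith [mul_self_pos.mpr hDy]
    · rw [e3]; nlinarith [mul_self_pos.mpr hDw]
    · rw [e4]; nlinarith [mul_self_pos.mpr hDw]

lemma excl {D E A1 A2 A3 T1 T2 T3 : ℝ} (h1 : 0 < A1 * D) (h2 : 0 < A2 * D) (h3 : 0 < A3 * D)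
    (ht1 : T1 * E ≤ 0) (ht2 : T2 * E ≤ 0) (ht3 : T3 * E < 0)
    (heq : A1 * T1 + A2 * T2 + A3 * T3 = 0) : False := by
  have k1 : (A1 * D) * (T1 * E) ≤ 0 := mul_nonpos_of_nonneg_of_nonpos h1.le ht1
  have k2 : (A2 * D) * (T2 * E) ≤ 0 := mul_nonpos_of_nonneg_of_nonpos h2.le ht2
  have k3 : (A3 * D) * (T3 * E) < 0 := mul_neg_of_pos_of_neg h3 ht3
  have ksum : (A1 * D) * (T1 * E) + (A2 * D) * (T2 * E) + (A3 * D) * (T3 * E) = 0 := by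
    linear_combination (D * E) * heq
  linarith

lemma sgnle {s0 D G : ℝ} (h1 : 0 < s0 * D) (h2 : s0 * G ≤ 0) : D * G ≤ 0 := by
  have hs : s0 ≠ 0 := by rintro rfl; simp at h1
  have hs2 : 0 < s0 * s0 := mul_self_pos.mpr hs
  nlinarith [mul_nonpos_of_nonneg_of_nonpos h1.le h2]

/-- In a generalized double circle, let `p` be extreme, `q` an interior neighbor of
`p` on the common chain `C`, and `x ∈ S` with the open triangle `pqx` containing a
point of `S`. Then `x ∉ C` but `x` lies on the other chain containing `p`. -/
theorem stmt_11 (S : Finset Pt) (hgp : GenPos S) (g : GDCOn S)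
    (C : Finset Pt) (hC : C ∈ g.chains)
    (p q : Pt) (hpC : p ∈ C) (hqC : q ∈ C)
    (hp : ExtremePt S p) (hq : q ∈ S) (hqint : ¬ ExtremePt S q)
    (hnb : ∃ u w, IsConcaveChain S C u w ∧ ChainEdge C u w p q)
    (x : Pt) (hx : x ∈ S)
    (y : Pt) (hy : y ∈ S)
    (hytri : y ∈ interior (convexHull ℝ ({p, q, x} : Set Pt))) :
    x ∉ C ∧ ∃ C' ∈ g.chains, C' ≠ C ∧ p ∈ C' ∧ x ∈ C' := by
  obtain ⟨u, w, hCC, hE⟩ := hnb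
  obtain ⟨hCS, huC, hwC, huw, hu_ext, hw_ext, hconvC, honly, hsides⟩ := hCC
  obtain ⟨ht1, ht2, ht3⟩ := tri hytri
  have hD0 : sign3 p q x ≠ 0 := by
    intro h0; rw [h0, mul_zero] at ht1; exact lt_irrefl 0 ht1
  have hpq : p ≠ q := sign3_ne12 hD0
  have hpx : p ≠ x := sign3_ne13 hD0
  have hqx : q ≠ x := sign3_ne23 hD0
  have hynp : y ≠ p := by
    rintro rfl; rw [sign3_self2, zero_mul] at ht3; exact lt_irrefl 0 ht3
  have hynq : y ≠ q := by
    rintro rfl; rw [sign3_self1, zero_mul] at ht2; exact lt_irrefl 0 ht2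
  have hynx : y ≠ x := by
    rintro rfl; rw [sign3_self2, zero_mul] at ht2; exact lt_irrefl 0 ht2
  -- Part 1 : x ∉ C
  have hxC : x ∉ C := by
    intro hxCm
    have hyC : y ∉ C := by
      intro hyCm
      apply hconvC y hyCm
      have hsubset : ({p, q, x} : Set Pt) ⊆ ↑(C.erase y) := by
        intro z hz
        simp only [Set.mem_insert_iff, Set.mem_singleton_iff] at hz
        rcases hz with h | h | h <;> rw [h] <;>
          exact Finset.mem_coe.mpr (Finset.mem_erase.mpr (by
            first
              | exact ⟨Ne.symm hynp, hpC⟩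
              | exact ⟨Ne.symm hynq, hqC⟩
              | exact ⟨Ne.symm hynx, hxCm⟩))
      exact convexHull_mono hsubset (interior_subset hytri)
    have s1 := hsides p hpC q hqC hpq y hy hyC
    have s2 := hsides q hqC x hxCm hqx y hy hyC
    have s3 := hsides x hxCm p hpC (Ne.symm hpx) y hy hyC
    have d1 : sign3 p q x * sign3 p q u ≤ 0 := sgnle ht1 s1.2.1
    have d2 : sign3 p q x * sign3 q x u ≤ 0 := sgnle ht2 s2.2.1
    have d3 : sign3 p q x * sign3 x p u ≤ 0 := sgnle ht3 s3.2.1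
    have hsumu := sign3_sum p q x u
    have hDD : 0 < sign3 p q x * sign3 p q x := mul_self_pos.mpr hD0
    have key : sign3 p q x * sign3 q x u + sign3 p q x * sign3 x p u
        + sign3 p q x * sign3 p q u = sign3 p q x * sign3 p q x := by
      linear_combination sign3 p q x * hsumu
    linarith [d1, d2, d3, hDD, key]
  -- Part 2 : the other chain through p contains x
  have hcard := g.extreme_mem p hp.1 hp
  have hCfil : C ∈ g.chains.filter (fun C => p ∈ C) := Finset.mem_filter.mpr ⟨hC, hpC⟩
  obtain ⟨C', hC'fil, hC'ne⟩ : ∃ C' ∈ g.chains.filter (fun C => p ∈ C), C' ≠ C := by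
    have h1 : ((g.chains.filter (fun C => p ∈ C)).erase C).Nonempty := by
      rw [← Finset.card_pos, Finset.card_erase_of_mem hCfil, hcard]
      norm_num
    obtain ⟨C'', hC''⟩ := h1
    exact ⟨C'', Finset.mem_of_mem_erase hC'', Finset.ne_of_mem_erase hC''⟩
  have hC'chains : C' ∈ g.chains := (Finset.mem_filter.mp hC'fil).1
  have hpC' : p ∈ C' := (Finset.mem_filter.mp hC'fil).2
  refine ⟨hxC, C', hC'chains, hC'ne, hpC', ?_⟩
  by_contra hxC'
  -- q lies only on the chain C
  have hqonly : ∀ D0 ∈ g.chains, q ∈ D0 → D0 = C := by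
    intro D0 hD0m hqD0
    obtain ⟨Cq, hCq⟩ := Finset.card_eq_one.mp (g.interior_mem q hq hqint)
    have e1 : C ∈ g.chains.filter (fun C => q ∈ C) := Finset.mem_filter.mpr ⟨hC, hqC⟩
    have e2 : D0 ∈ g.chains.filter (fun C => q ∈ C) := Finset.mem_filter.mpr ⟨hD0m, hqD0⟩
    rw [hCq, Finset.mem_singleton] at e1 e2
    rw [e2, ← e1]
  -- p lies only on the chains C and C'
  have hponly : ∀ D0 ∈ g.chains, p ∈ D0 → D0 = C ∨ D0 = C' := by
    intro D0 hD0m hpD0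
    by_contra hcon
    push_neg at hcon
    have hsub : ({C, C', D0} : Finset (Finset Pt)) ⊆ g.chains.filter (fun C => p ∈ C) := by
      intro E hE'
      simp only [Finset.mem_insert, Finset.mem_singleton] at hE'
      rcases hE' with h | h | h <;> rw [h]
      · exact hCfil
      · exact hC'fil
      · exact Finset.mem_filter.mpr ⟨hD0m, hpD0⟩
    have hcard3 : ({C, C', D0} : Finset (Finset Pt)).card = 3 := by
      rw [Finset.card_insert_of_notMem, Finset.card_insert_of_notMem,
        Finset.card_singleton]
      · simp only [Finset.mem_singleton]; exact Ne.symm hcon.2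
      · simp only [Finset.mem_insert, Finset.mem_singleton]
        push_neg
        exact ⟨Ne.symm hC'ne, fun h => hcon.1 h.symm⟩
    have := Finset.card_le_card hsub
    rw [hcard3, hcard] at this
    norm_num at this
  -- case analysis on the location of y
  by_cases hyext : ExtremePt S y
  · -- y extreme : impossible, y is in the interior of the hull of other points
    apply hyext.2
    have hsubset : ({p, q, x} : Set Pt) ⊆ ↑(S.erase y) := by
      intro z hz
      simp only [Set.mem_insert_iff, Set.mem_singleton_iff] at hz
      rcases hz with h | h | h <;> rw [h] <;>
        exact Finset.mem_coe.mpr (Finset.mem_erase.mpr (by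
          first
            | exact ⟨Ne.symm hynp, hp.1⟩
            | exact ⟨Ne.symm hynq, hq⟩
            | exact ⟨Ne.symm hynx, hx⟩))
    exact convexHull_mono hsubset (interior_subset hytri)
  by_cases hyC : y ∈ C
  · -- y on the chain C : contradicts the hull-edge property of pq
    obtain ⟨t, htC, ht_ext, htp, htprod⟩ : ∃ t, t ∈ C ∧ ExtremePt S t ∧ t ≠ p ∧
        sign3 p q x * sign3 p q t ≤ 0 := by
      by_cases hpu : p = u
      · exact ⟨w, hwC, hw_ext, by rw [hpu]; exact Ne.symm huw,
          (hsides p hpC q hqC hpq x hx hxC).2.2⟩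
      · exact ⟨u, huC, hu_ext, fun h => hpu h.symm,
          (hsides p hpC q hqC hpq x hx hxC).2.1⟩
    have hqt : q ≠ t := fun h => hqint (by rw [h]; exact ht_ext)
    have hWne : sign3 p q t ≠ 0 := gp_sign3 hgp hp.1 hq (hCS htC) hpq (Ne.symm htp) hqt
    have hDW : sign3 p q x * sign3 p q t < 0 :=
      lt_of_le_of_ne htprod (mul_ne_zero hD0 hWne)
    have hDyne : sign3 p q y ≠ 0 :=
      gp_sign3 hgp hp.1 hq hy hpq (Ne.symm hynp) (Ne.symm hynq)
    have hF := hullF hpC hqC hyC htC hDyne hWne hE.2.2.2.1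
    nlinarith [ht1, hDW, hF, mul_self_pos.mpr hDyne]
  by_cases hyC' : y ∈ C'
  · -- y on the chain C'
    obtain ⟨p1, q1, hCC'⟩ := g.chains_concave C' hC'chains
    obtain ⟨hC'S, hp1, hq1, hp1q1, hp1e, hq1e, _, honly', hsides'⟩ := hCC'
    have hpe : p = p1 ∨ p = q1 := honly' p hpC' hp
    have hq_notC' : q ∉ C' := fun h => hC'ne (hqonly C' hC'chains h)
    have sq' := hsides' p hpC' y hyC' (Ne.symm hynp) q hq hq_notC'
    have sx' := hsides' p hpC' y hyC' (Ne.symm hynp) x hx hxC'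
    obtain ⟨t', ht'C, ht'e, ht'p, hprodq, hprodx⟩ : ∃ t', t' ∈ C' ∧ ExtremePt S t' ∧
        t' ≠ p ∧ sign3 p y q * sign3 p y t' ≤ 0 ∧ sign3 p y x * sign3 p y t' ≤ 0 := by
      rcases hpe with h | h
      · exact ⟨q1, hq1, hq1e, by rw [h]; exact Ne.symm hp1q1, sq'.2.2, sx'.2.2⟩
      · exact ⟨p1, hp1, hp1e, by rw [h]; exact hp1q1, sq'.2.1, sx'.2.1⟩
    have hyt' : y ≠ t' := fun h => hyext (by rw [h]; exact ht'e)
    have hEne : sign3 p y t' ≠ 0 :=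
      gp_sign3 hgp hp.1 hy (hC'S ht'C) (Ne.symm hynp) (Ne.symm ht'p) hyt'
    have hstrict : sign3 p y x * sign3 p y t' < 0 :=
      lt_of_le_of_ne hprodx (mul_ne_zero sx'.1 hEne)
    have hb := sign3_bary p y p q x y
    rw [sign3_self2, sign3_self1, mul_zero, mul_zero] at hb
    refine excl (T1 := sign3 p y p) ht2 ht3 ht1 ?_ hprodq hstrict ?_
    · exact le_of_eq (by rw [sign3_self1, zero_mul])
    · rw [sign3_self1, mul_zero]
      linarith [hb]
  · -- y lies on a chain distinct from C and C'
    obtain ⟨Dy, hDy⟩ := Finset.card_eq_one.mp (g.interior_mem y hy hyext)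
    have hDymem : Dy ∈ g.chains ∧ y ∈ Dy := by
      have : Dy ∈ g.chains.filter (fun C => y ∈ C) := by
        rw [hDy]; exact Finset.mem_singleton_self Dy
      exact Finset.mem_filter.mp this
    have hyDy : y ∈ Dy := hDymem.2
    have hDyC : Dy ≠ C := fun h => hyC (h ▸ hyDy)
    have hDyC' : Dy ≠ C' := fun h => hyC' (h ▸ hyDy)
    have hpDy : p ∉ Dy := fun h =>
      (hponly Dy hDymem.1 h).elim (fun h' => hDyC h') (fun h' => hDyC' h')
    have hqDy : q ∉ Dy := fun h => hDyC (hqonly Dy hDymem.1 h)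
    obtain ⟨e1, e2, hCCD⟩ := g.chains_concave Dy hDymem.1
    obtain ⟨hDS, he1, he2, he12, he1e, he2e, _, honlyD, hsidesD⟩ := hCCD
    have hyne1 : y ≠ e1 := fun h => hyext (by rw [h]; exact he1e)
    have hyne2 : y ≠ e2 := fun h => hyext (by rw [h]; exact he2e)
    by_cases hxDy : x ∈ Dy
    · -- x on the same chain as y : use the line through y and x
      obtain ⟨e, heC, hee, hex, hprods⟩ : ∃ e, e ∈ Dy ∧ e ≠ y ∧ e ≠ x ∧
          ∀ z ∈ S, z ∉ Dy → sign3 y x z * sign3 y x e ≤ 0 := by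
        by_cases h1 : e1 = x
        · refine ⟨e2, he2, Ne.symm hyne2, by rw [← h1]; exact Ne.symm he12, ?_⟩
          intro z hz hzD; exact (hsidesD y hyDy x hxDy hynx z hz hzD).2.2
        · refine ⟨e1, he1, Ne.symm hyne1, h1, ?_⟩
          intro z hz hzD; exact (hsidesD y hyDy x hxDy hynx z hz hzD).2.1
      have hEne : sign3 y x e ≠ 0 :=
        gp_sign3 hgp hy hx (hDS heC) hynx (Ne.symm hee) (Ne.symm hex)
      have hTpne : sign3 y x p ≠ 0 := (hsidesD y hyDy x hxDy hynx p hp.1 hpDy).1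
      have hTpstrict : sign3 y x p * sign3 y x e < 0 :=
        lt_of_le_of_ne (hprods p hp.1 hpDy) (mul_ne_zero hTpne hEne)
      have hTqle : sign3 y x q * sign3 y x e ≤ 0 := hprods q hq hqDy
      have hb := sign3_bary y x p q x y
      rw [sign3_self1, sign3_self2, mul_zero, mul_zero] at hb
      refine excl (T2 := sign3 y x x) ht3 ht1 ht2 hTqle ?_ hTpstrict ?_
      · exact le_of_eq (by rw [sign3_self2, zero_mul])
      · rw [sign3_self2, mul_zero]
        linarith [hb]
    · -- x on yet another chain : use the line through y and an endpoint of y's chain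
      have hEne : sign3 y e1 e2 ≠ 0 :=
        gp_sign3 hgp hy (hDS he1) (hDS he2) hyne1 hyne2 he12
      have sP := hsidesD y hyDy e1 he1 hyne1 p hp.1 hpDy
      have sQ := hsidesD y hyDy e1 he1 hyne1 q hq hqDy
      have sX := hsidesD y hyDy e1 he1 hyne1 x hx hxDy
      have hXstrict : sign3 y e1 x * sign3 y e1 e2 < 0 :=
        lt_of_le_of_ne sX.2.2 (mul_ne_zero sX.1 hEne)
      have hb := sign3_bary y e1 p q x y
      rw [sign3_self1, mul_zero] at hb
      exact excl ht2 ht3 ht1 sP.2.2 sQ.2.2 hXstrict (by linarith [hb])
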